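/- Let B ⊆ ℤ/pℤ be a regular Bohr set of dimension d and A ⊆ B with |A| = α|B|, and let ε > 0. Given subsets B^1, …, B^k ⊆ ℤ/pℤ with ||μ_B * μ_{B^i} − μ_B||_1 ≤ εα/k for each i, there exists x ∈ B such that Σ_{i=1}^k (μ_{B^i} * 1_A)(x) ≥ (k − ε) α. Consequently, if additionally ||μ_{B^i} * 1_A||_∞ ≤ (1 + 1/(16k)) α for all i and ε = 1/16, then for every i, (μ_{B^i} * 1_A)(x) ≥ (7/8) α. -/

import Mathlib

open scoped Classical BigOperators Pointwise

variable {G : Type*} [AddCommGroup G] [Fintype G]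

/-- The Bohr set `Bohr(Γ, ρ) = {x : |1 - γ(x)| ≤ ρ for all γ ∈ Γ}`. -/
noncomputable def bohr (Γ : Finset (AddChar G ℂ)) (ρ : ℝ) : Finset G :=
  Finset.univ.filter fun x => ∀ γ ∈ Γ, ‖1 - γ x‖ ≤ ρ

/-- Regularity of the Bohr set `Bohr(Γ, ρ)` (dimension `d = Γ.card`). -/
noncomputable def BohrRegular (Γ : Finset (AddChar G ℂ)) (ρ : ℝ) : Prop :=
  ∀ δ : ℝ, |δ| ≤ 1 / (12 * Γ.card) →
    (1 - 12 * Γ.card * |δ|) * (bohr Γ ρ).card ≤ ((bohr Γ (ρ * (1 + δ))).card : ℝ) ∧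
    ((bohr Γ (ρ * (1 + δ))).card : ℝ) ≤ (1 + 12 * Γ.card * |δ|) * (bohr Γ ρ).card

/-- Indicator function of a finite set. -/
noncomputable def ind (A : Finset G) : G → ℝ := fun x => if x ∈ A then 1 else 0

/-- Normalized indicator `μ_A = 1_A / |A|`. -/
noncomputable def mu (A : Finset G) : G → ℝ := fun x => (if x ∈ A then 1 else 0) / A.card

/-- Convolution `(f * g)(x) = ∑ t, f t * g (x - t)`. -/
noncomputable def conv (f g : G → ℝ) : G → ℝ := fun x => ∑ t, f t * g (x - t)

/-- `L¹` norm. -/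
noncomputable def l1 (f : G → ℝ) : ℝ := ∑ x, |f x|

/-!
Pairing with the symmetric weight `μ_B` moves the convolution with `μ_{B^i}` onto `μ_B`, so
the `μ_B`-average of `μ_{B^i} * 1_A` is `Σ_{a ∈ A} (μ_B * μ_{B^i})(-a)`, which is within
`‖μ_B * μ_{B^i} - μ_B‖₁ ≤ εα/k` of `μ_B(A) = α`. Summing over `i`, the `μ_B`-average of
`Σ_i μ_{B^i} * 1_A` is at least `(k - ε)α`, so some `x ∈ B` attains it. If every summand is
at most `(1 + 1/(16k))α`, the other `k - 1` summands at `x` account for at most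
`(k - 1)(1 + 1/(16k))α`, leaving at least `(7/8 + 1/(16k))α` for each single one.
-/

lemma conv_comm (f g : G → ℝ) : conv f g = conv g f := by
  funext x
  rw [conv, ← Equiv.sum_comp (Equiv.subLeft x)]
  simp [conv, mul_comm]

lemma zero_mem_bohr (Γ : Finset (AddChar G ℂ)) {ρ : ℝ} (hρ : 0 ≤ ρ) : (0 : G) ∈ bohr Γ ρ := by
  simp [bohr, hρ]

lemma neg_mem_bohr_iff (Γ : Finset (AddChar G ℂ)) (ρ : ℝ) (x : G) :
    -x ∈ bohr Γ ρ ↔ x ∈ bohr Γ ρ := by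
  have hconj : ∀ γ : AddChar G ℂ, ‖1 - γ (-x)‖ = ‖1 - γ x‖ := fun γ => by
    rw [AddChar.map_neg_eq_inv, AddChar.inv_apply_eq_conj, ← Complex.norm_conj, map_sub,
      map_one, Complex.conj_conj]
  simp only [bohr, Finset.mem_filter, Finset.mem_univ, true_and, hconj]

lemma mu_neg {X : Type*} [Neg X] {B : Finset X} (hB : ∀ x, -x ∈ B ↔ x ∈ B) (x : X) :
    mu B (-x) = mu B x := by
  simp only [mu, hB]

lemma sum_mu_of_subset {X : Type*} {A B : Finset X} (hA : A ⊆ B) :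
    ∑ a ∈ A, mu B a = (A.card / B.card : ℝ) := by
  rw [Finset.sum_congr rfl fun a ha => show mu B a = 1 / B.card by simp [mu, hA ha],
    Finset.sum_const, nsmul_eq_mul, mul_one_div]

lemma sum_ind_mul {X : Type*} [Fintype X] (A : Finset X) (f : X → ℝ) :
    ∑ x, ind A x * f x = ∑ a ∈ A, f a := by
  simp [ind, ite_mul, Finset.sum_ite_mem]

lemma sum_mul_conv_of_neg {f : G → ℝ} (hf : ∀ x, f (-x) = f x) (g h : G → ℝ) :
    ∑ x, f x * conv g h x = ∑ y, h y * conv f g (-y) := by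
  have hshift : ∀ t, ∑ x, f x * (g t * h (x - t)) = ∑ y, h y * (g t * f (-y - t)) :=
    fun t => by
    rw [← Equiv.sum_comp (Equiv.addRight t)]
    refine Finset.sum_congr rfl fun y _ => ?_
    rw [Equiv.coe_addRight, add_sub_cancel_right, show -y - t = -(y + t) by abel, hf]
    ring
  rw [conv_comm f g]
  simp only [conv, Finset.mul_sum]
  rw [Finset.sum_comm, Finset.sum_congr rfl fun t _ => hshift t, Finset.sum_comm]

lemma neg_l1_le_sum_comp_neg (d : G → ℝ) (A : Finset G) : -l1 d ≤ ∑ a ∈ A, d (-a) := by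
  have hA : ∑ a ∈ A, |d (-a)| ≤ l1 d := by
    calc ∑ a ∈ A, |d (-a)| ≤ ∑ a, |d (-a)| :=
          Finset.sum_le_sum_of_subset_of_nonneg (Finset.subset_univ A) fun _ _ _ => abs_nonneg _
      _ = l1 d := Equiv.sum_comp (Equiv.neg G) fun x => |d x|
  have := Finset.sum_le_sum fun a (_ : a ∈ A) => neg_abs_le (d (-a))
  rw [Finset.sum_neg_distrib] at this
  linarith

lemma card_div_sub_l1_le_sum_mu_mul_conv_ind {A B : Finset G} (hB : ∀ x, -x ∈ B ↔ x ∈ B)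
    (hA : A ⊆ B) (ν : G → ℝ) :
    (A.card / B.card : ℝ) - l1 (fun x => conv (mu B) ν x - mu B x) ≤
      ∑ x, mu B x * conv ν (ind A) x := by
  have hsplit : ∑ x, mu B x * conv ν (ind A) x =
      ∑ a ∈ A, mu B a + ∑ a ∈ A, (conv (mu B) ν (-a) - mu B (-a)) := by
    rw [sum_mul_conv_of_neg (mu_neg hB), sum_ind_mul, ← Finset.sum_add_distrib]
    exact Finset.sum_congr rfl fun a _ => by rw [mu_neg hB]; ring
  rw [hsplit, sum_mu_of_subset hA]
  linarith [neg_l1_le_sum_comp_neg (fun x => conv (mu B) ν x - mu B x) A]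

lemma exists_mem_le_of_le_sum_mu_mul {X : Type*} [Fintype X] {B : Finset X} (hB : B.Nonempty)
    {F : X → ℝ} {c : ℝ} (hc : c ≤ ∑ x, mu B x * F x) : ∃ x ∈ B, c ≤ F x := by
  have hcard : (0 : ℝ) < B.card := by exact_mod_cast hB.card_pos
  have havg : ∑ x, mu B x * F x = ∑ x ∈ B, F x / B.card := by
    rw [← Finset.sum_subset (Finset.subset_univ B) fun x _ hx => by simp [mu, hx]]
    exact Finset.sum_congr rfl fun x hx => by simp [mu, hx, inv_mul_eq_div]
  have hsum : ∑ _x ∈ B, c / B.card ≤ ∑ x ∈ B, F x / B.card := by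
    rw [Finset.sum_const, nsmul_eq_mul, mul_div_cancel₀ _ hcard.ne', ← havg]
    exact hc
  obtain ⟨x, hxB, hx⟩ := Finset.exists_le_of_sum_le hB hsum
  exact ⟨x, hxB, (div_le_div_iff_of_pos_right hcard).mp hx⟩

lemma sub_mul_le_of_le_sum {ι : Type*} [Fintype ι] {s : ι → ℝ} {S M : ℝ}
    (hS : S ≤ ∑ j, s j) (hM : ∀ j, s j ≤ M) (i : ι) :
    S - (Fintype.card ι - 1) * M ≤ s i := by
  have hrest := Finset.sum_le_sum fun j (_ : j ∈ Finset.univ.erase i) => hM j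
  rw [Finset.sum_erase_eq_sub (Finset.mem_univ i), Finset.sum_erase_eq_sub (Finset.mem_univ i),
    Finset.sum_const, Finset.card_univ, nsmul_eq_mul] at hrest
  linarith

theorem averaging_core_general (p : ℕ) [Fact p.Prime]
    (Γ : Finset (AddChar (ZMod p) ℂ)) (ρ α ε : ℝ) (hρ0 : 0 < ρ)
    (A : Finset (ZMod p)) (hA : A ⊆ bohr Γ ρ)
    (hAcard : (A.card : ℝ) = α * (bohr Γ ρ).card)
    (k : ℕ) (hk : 0 < k) (Bi : Fin k → Finset (ZMod p))
    (hclose : ∀ i, l1 (fun x => conv (mu (bohr Γ ρ)) (mu (Bi i)) x - mu (bohr Γ ρ) x)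
      ≤ ε * α / k) :
    ∃ x ∈ bohr Γ ρ,
      ((k : ℝ) - ε) * α ≤ (∑ i, conv (mu (Bi i)) (ind A) x) ∧
      (ε = 1 / 16 →
        (∀ i, ∀ y, conv (mu (Bi i)) (ind A) y ≤ (1 + 1 / (16 * k)) * α) →
        ∀ i, 7 / 8 * α ≤ conv (mu (Bi i)) (ind A) x) := by
  have hB : (bohr Γ ρ).Nonempty := ⟨0, zero_mem_bohr Γ hρ0.le⟩
  have hBcard : (0 : ℝ) < (bohr Γ ρ).card := by exact_mod_cast hB.card_pos
  have hdensity : (A.card / (bohr Γ ρ).card : ℝ) = α := by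
    rw [hAcard, mul_div_cancel_right₀ _ hBcard.ne']
  have hα : 0 ≤ α := hdensity ▸ div_nonneg (Nat.cast_nonneg _) (Nat.cast_nonneg _)
  have hk' : (0 : ℝ) < k := by exact_mod_cast hk
  have havg : ((k : ℝ) - ε) * α ≤ ∑ x, mu (bohr Γ ρ) x * ∑ i, conv (mu (Bi i)) (ind A) x := by
    calc ((k : ℝ) - ε) * α = ∑ _i : Fin k, (α - ε * α / k) := by
          rw [Finset.sum_const, Finset.card_univ, Fintype.card_fin, nsmul_eq_mul]
          field_simp
      _ ≤ ∑ i, ∑ x, mu (bohr Γ ρ) x * conv (mu (Bi i)) (ind A) x :=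
          Finset.sum_le_sum fun i _ => by
            linarith [hclose i, hdensity, card_div_sub_l1_le_sum_mu_mul_conv_ind
              (neg_mem_bohr_iff Γ ρ) hA (mu (Bi i))]
      _ = _ := by simp only [Finset.mul_sum]; exact Finset.sum_comm
  obtain ⟨x, hxB, hx⟩ := exists_mem_le_of_le_sum_mu_mul hB havg
  refine ⟨x, hxB, hx, ?_⟩
  rintro rfl hsup i
  have hsingle := sub_mul_le_of_le_sum hx (fun j => hsup j x) i
  rw [Fintype.card_fin] at hsingle
  calc 7 / 8 * α ≤ 7 / 8 * α + α / (16 * k) := le_add_of_nonneg_right (by positivity)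
    _ = (k - 1 / 16) * α - (k - 1) * ((1 + 1 / (16 * k)) * α) := by field_simp; ring
    _ ≤ _ := hsingle

/-- the averaging core of the coefficient-dilation lemma. If each
`μ_B * μ_{B^i}` is `εα/k`-close to `μ_B` in `L¹`, then some `x ∈ B` has
`∑ i (μ_{B^i} * 1_A)(x) ≥ (k - ε)α`; consequently, if moreover
`‖μ_{B^i} * 1_A‖_∞ ≤ (1 + 1/(16k))α` for all `i` and `ε = 1/16`, then
`(μ_{B^i} * 1_A)(x) ≥ (7/8)α` for every `i`. -/
theorem averaging_core (p : ℕ) [Fact p.Prime]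
    (Γ : Finset (AddChar (ZMod p) ℂ)) (ρ α ε : ℝ) (hρ0 : 0 < ρ) (hρ2 : ρ ≤ 2)
    (hreg : BohrRegular Γ ρ) (A : Finset (ZMod p)) (hA : A ⊆ bohr Γ ρ)
    (hAcard : (A.card : ℝ) = α * (bohr Γ ρ).card) (hα : 0 < α) (hε : 0 < ε)
    (k : ℕ) (hk : 0 < k) (Bi : Fin k → Finset (ZMod p))
    (hclose : ∀ i, l1 (fun x => conv (mu (bohr Γ ρ)) (mu (Bi i)) x - mu (bohr Γ ρ) x)
      ≤ ε * α / k) :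
    ∃ x ∈ bohr Γ ρ,
      ((k : ℝ) - ε) * α ≤ (∑ i, conv (mu (Bi i)) (ind A) x) ∧
      (ε = 1 / 16 →
        (∀ i, ∀ y, conv (mu (Bi i)) (ind A) y ≤ (1 + 1 / (16 * k)) * α) →
        ∀ i, 7 / 8 * α ≤ conv (mu (Bi i)) (ind A) x) :=
  averaging_core_general p Γ ρ α ε hρ0 A hA hAcard k hk Bi hclose
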